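/- arXiv:2501.19369 — 5 statements merged into one kernel-verified Lean document; each statement's English description precedes it below -/
import Mathlib

section
/- Let β > 0. There exists a pair of Lipschitz continuous functions φ : X → ℝ and ψ : Y → ℝ, with Lipschitz constants Lip(φ) ≤ β·Lip(A) and Lip(ψ) ≤ β·Lip(A), such that ∫_X e^{βA(x,y)+φ(x)+ψ(y)} dμ(x) = 1 for every y ∈ Y and ∫_Y e^{βA(x,y)+φ(x)+ψ(y)} dν(y) = 1 for every x ∈ X. -/
open MeasureTheory

/-!
The potentials come from Sinkhorn's algorithm. Let `κ = β A`,
`G φ y = -log ∫ exp (κ x y + φ x) dμ(x)` (this is `sinkhornStep μ κ φ y`) and let `H` be the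
same map with `X` and `Y` exchanged; we need `ψ = G φ` and `φ = H ψ`. If `ω` bounds the cross
differences `κ x y' + κ x' y - κ x y - κ x' y'`, the normalized Gibbs weights `exp (κ · y + φ)`
at `y` dominate `ε = exp (-ω)` times those at `y'`. Splitting off that part (a Doeblin argument)
and using convexity of `exp` shows that `G` shrinks the oscillation of `φ₁ - φ₂` by the factor
`1 - ε`, and so does `H`. Normalized at a base point, the iterates of `H ∘ G` therefore converge
geometrically in `C(X)` to some `φ` with `H (G φ) = φ + c`, and integrating `exp (κ + φ + ψ)`
over `X × Y` in both orders forces `c = 0`. The Lipschitz bounds pass from `κ` to `G φ` and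
`H ψ` by monotonicity of the integral.
-/

theorem le_exp_mul_of_convex_comb_le {ε a b u v : ℝ} (hε₀ : 0 ≤ ε) (hε₁ : ε ≤ 1) (hu₀ : 0 ≤ u)
    (hu : u ≤ Real.exp b) (hv : ε * u + (1 - ε) * Real.exp a ≤ v) :
    u ≤ Real.exp ((1 - ε) * (b - a)) * v := by
  set C := Real.exp ((1 - ε) * (b - a))
  have hconv : Real.exp ((1 - ε) * (a - b)) ≤ ε + (1 - ε) * Real.exp (a - b) := by
    simpa using convexOn_exp.2 (Set.mem_univ 0) (Set.mem_univ (a - b)) hε₀ (sub_nonneg.2 hε₁)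
      (by ring)
  have hb : Real.exp b ≤ C * (ε * Real.exp b + (1 - ε) * Real.exp a) := calc
    Real.exp b = C * Real.exp b * Real.exp ((1 - ε) * (a - b)) := by
      rw [mul_right_comm, ← Real.exp_add, ← Real.exp_add]; ring_nf
    _ ≤ C * Real.exp b * (ε + (1 - ε) * Real.exp (a - b)) := by gcongr
    _ = C * (ε * Real.exp b + (1 - ε) * Real.exp a) := by rw [Real.exp_sub]; field_simp
  have hC : 0 ≤ C := (Real.exp_pos _).le
  have hCv : C * (ε * u + (1 - ε) * Real.exp a) ≤ C * v := mul_le_mul_of_nonneg_left hv hC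
  have hCa : 0 ≤ C * ((1 - ε) * Real.exp a) := by
    have := Real.exp_pos a
    have : 0 ≤ 1 - ε := by linarith
    positivity
  rcases le_total 1 (C * ε) with h | h
  · nlinarith
  · nlinarith [mul_le_mul_of_nonneg_left hu (sub_nonneg.2 h)]

theorem continuous_of_abs_sub_le_mul_dist_add_dist {X Y : Type*} [PseudoMetricSpace X]
    [PseudoMetricSpace Y] {f : X × Y → ℝ} {L : ℝ}
    (hf : ∀ p q : X × Y, |f p - f q| ≤ L * (dist p.1 q.1 + dist p.2 q.2)) : Continuous f := by
  refine (LipschitzWith.of_dist_le' (K := 2 * |L|) fun p q => ?_).continuous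
  calc dist (f p) (f q) ≤ L * (dist p.1 q.1 + dist p.2 q.2) := hf p q
    _ ≤ |L| * (dist p q + dist p q) :=
      mul_le_mul (le_abs_self L) (add_le_add (le_max_left _ _) (le_max_right _ _))
        (by positivity) (abs_nonneg L)
    _ = 2 * |L| * dist p q := by ring

section SinkhornStep

variable {X : Type*} [TopologicalSpace X] [CompactSpace X] [MeasurableSpace X]
  [OpensMeasurableSpace X] {μ : Measure X} [IsFiniteMeasure μ]

theorem Continuous.integrable_of_compactSpace {f : X → ℝ} (hf : Continuous f) : Integrable f μ :=
  hf.integrable_of_hasCompactSupport (.of_compactSpace f)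

theorem integral_mul_div_integral_le {w₁ w₂ g : X → ℝ} {ε a b : ℝ} (hw₁ : Continuous w₁)
    (hw₂ : Continuous w₂) (hg : Continuous g) (hw₂₀ : ∀ x, 0 ≤ w₂ x)
    (hZ₁ : 0 < ∫ x, w₁ x ∂μ) (hZ₂ : 0 < ∫ x, w₂ x ∂μ) (hε₀ : 0 ≤ ε) (hε₁ : ε ≤ 1)
    (hdom : ∀ x, ε * (∫ x, w₁ x ∂μ) * w₂ x ≤ (∫ x, w₂ x ∂μ) * w₁ x)
    (hga : ∀ x, Real.exp a ≤ g x) (hgb : ∀ x, g x ≤ Real.exp b) :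
    (∫ x, w₂ x * g x ∂μ) / (∫ x, w₂ x ∂μ) ≤
      Real.exp ((1 - ε) * (b - a)) * ((∫ x, w₁ x * g x ∂μ) / ∫ x, w₁ x ∂μ) := by
  set Z₁ := ∫ x, w₁ x ∂μ
  set Z₂ := ∫ x, w₂ x ∂μ
  set t := ε * Z₁ / Z₂
  have hrest : ∀ x, 0 ≤ w₁ x - t * w₂ x := fun x => by
    rw [sub_nonneg, div_mul_eq_mul_div, div_le_iff₀ hZ₂]
    linarith [hdom x]
  have hupper : ∫ x, w₂ x * g x ∂μ ≤ Real.exp b * Z₂ := by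
    rw [← integral_const_mul]
    exact integral_mono (hw₂.mul hg).integrable_of_compactSpace
      (continuous_const.mul hw₂).integrable_of_compactSpace fun x => by
        nlinarith [hw₂₀ x, hgb x]
  have hlower : t * ∫ x, w₂ x * g x ∂μ + Real.exp a * (Z₁ - t * Z₂) ≤
      ∫ x, w₁ x * g x ∂μ := by
    have hrest_int : ∫ x, (w₁ x - t * w₂ x) * Real.exp a ∂μ ≤
        ∫ x, (w₁ x - t * w₂ x) * g x ∂μ :=
      integral_mono (Continuous.integrable_of_compactSpace (by fun_prop))
        (Continuous.integrable_of_compactSpace (by fun_prop))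
        fun x => mul_le_mul_of_nonneg_left (hga x) (hrest x)
    simp only [sub_mul, mul_assoc] at hrest_int
    rw [integral_sub, integral_sub, integral_const_mul, integral_const_mul, integral_mul_const,
      integral_mul_const] at hrest_int
    · linarith
    all_goals exact Continuous.integrable_of_compactSpace (by fun_prop)
  have htZ : t * Z₂ = ε * Z₁ := div_mul_cancel₀ _ hZ₂.ne'
  have htP : t * ∫ x, w₂ x * g x ∂μ = ε * ((∫ x, w₂ x * g x ∂μ) / Z₂) * Z₁ := by
    simp only [t]; ring
  rw [htZ, htP] at hlower
  apply le_exp_mul_of_convex_comb_le hε₀ hε₁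
  · exact div_nonneg (integral_nonneg fun x =>
      mul_nonneg (hw₂₀ x) ((Real.exp_pos a).le.trans (hga x))) hZ₂.le
  · rwa [div_le_iff₀ hZ₂]
  · rw [le_div_iff₀ hZ₁]
    linarith

variable {Y : Type*}

noncomputable def sinkhornStep (μ : Measure X) (κ : X → Y → ℝ) (φ : X → ℝ) (y : Y) : ℝ :=
  -Real.log (∫ x, Real.exp (κ x y + φ x) ∂μ)

variable [NeZero μ] {κ : X → Y → ℝ}

theorem exp_neg_sinkhornStep (hκ : ∀ y, Continuous fun x => κ x y) {φ : X → ℝ}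
    (hφ : Continuous φ) (y : Y) :
    Real.exp (-sinkhornStep μ κ φ y) = ∫ x, Real.exp (κ x y + φ x) ∂μ := by
  have := hκ y
  rw [sinkhornStep, neg_neg, Real.exp_log (integral_exp_pos
    (Continuous.integrable_of_compactSpace (by fun_prop)))]

theorem sinkhornStep_sub_le (hκ : ∀ y, Continuous fun x => κ x y) {φ : X → ℝ}
    (hφ : Continuous φ) {y y' : Y} {r : ℝ} (h : ∀ x, κ x y' ≤ κ x y + r) :
    sinkhornStep μ κ φ y - sinkhornStep μ κ φ y' ≤ r := by
  have hy := hκ y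
  have hy' := hκ y'
  have hmono : ∫ x, Real.exp (κ x y' + φ x) ∂μ ≤
      Real.exp r * ∫ x, Real.exp (κ x y + φ x) ∂μ := by
    rw [← integral_const_mul]
    refine integral_mono (Continuous.integrable_of_compactSpace (by fun_prop))
      (Continuous.integrable_of_compactSpace (by fun_prop)) fun x => ?_
    rw [← Real.exp_add, Real.exp_le_exp]
    linarith [h x]
  rw [← exp_neg_sinkhornStep hκ hφ, ← exp_neg_sinkhornStep hκ hφ, ← Real.exp_add,
    Real.exp_le_exp] at hmono
  linarith

theorem sinkhornStep_dist_le [PseudoMetricSpace Y] (hκ : ∀ y, Continuous fun x => κ x y)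
    {φ : X → ℝ} (hφ : Continuous φ) {K : ℝ} (h : ∀ x y y', κ x y' ≤ κ x y + K * dist y y')
    (y y' : Y) : dist (sinkhornStep μ κ φ y) (sinkhornStep μ κ φ y') ≤ K * dist y y' := by
  rw [Real.dist_eq, abs_sub_le_iff]
  constructor
  · exact sinkhornStep_sub_le hκ hφ fun x => h x y y'
  · exact sinkhornStep_sub_le hκ hφ fun x => dist_comm y y' ▸ h x y' y

theorem continuous_sinkhornStep [TopologicalSpace Y] [FirstCountableTopology Y]
    [LocallyCompactSpace Y] (hκ : Continuous (Function.uncurry κ)) {φ : X → ℝ}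
    (hφ : Continuous φ) : Continuous (sinkhornStep μ κ φ) := by
  have hint : Continuous fun y => ∫ x in Set.univ, Real.exp (κ x y + φ x) ∂μ :=
    continuous_parametric_integral_of_continuous (by fun_prop) isCompact_univ
  simp only [Measure.restrict_univ] at hint
  refine (hint.log fun y => (integral_exp_pos ?_).ne').neg
  exact Continuous.integrable_of_compactSpace (by fun_prop)

theorem sinkhornStep_osc_le (hκ : ∀ y, Continuous fun x => κ x y) {ω : ℝ}
    (hω : ∀ x x' y y', κ x y' + κ x' y ≤ κ x y + κ x' y' + ω) {φ₁ φ₂ : X → ℝ}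
    (h₁ : Continuous φ₁) (h₂ : Continuous φ₂) {s : ℝ}
    (hs : ∀ x x', φ₁ x - φ₂ x - (φ₁ x' - φ₂ x') ≤ s) (y y' : Y) :
    sinkhornStep μ κ φ₁ y - sinkhornStep μ κ φ₂ y -
        (sinkhornStep μ κ φ₁ y' - sinkhornStep μ κ φ₂ y') ≤ (1 - Real.exp (-ω)) * s := by
  have := Measure.nonempty_of_neZero μ
  obtain ⟨x₀, -, hx₀⟩ :=
    isCompact_univ.exists_isMinOn Set.univ_nonempty (h₁.sub h₂).continuousOn
  have hω₀ : 0 ≤ ω := by linarith [hω x₀ x₀ y y]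
  set w : Y → X → ℝ := fun y x => Real.exp (κ x y + φ₂ x)
  set g : X → ℝ := fun x => Real.exp (φ₁ x - φ₂ x)
  have hw : ∀ y, Continuous (w y) := fun y => by have := hκ y; fun_prop
  have hZ : ∀ y, ∫ x, w y x ∂μ = Real.exp (-sinkhornStep μ κ φ₂ y) := fun y =>
    (exp_neg_sinkhornStep hκ h₂ y).symm
  have hP : ∀ y, ∫ x, w y x * g x ∂μ = Real.exp (-sinkhornStep μ κ φ₁ y) := fun y => by
    simp only [w, g, ← Real.exp_add, add_add_sub_cancel]
    exact (exp_neg_sinkhornStep hκ h₁ y).symm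
  have hdom : ∀ x, Real.exp (-ω) * (∫ x, w y x ∂μ) * w y' x ≤ (∫ x, w y' x ∂μ) * w y x := by
    intro x
    rw [← integral_const_mul, ← integral_mul_const, ← integral_mul_const]
    refine integral_mono (Continuous.integrable_of_compactSpace (by fun_prop))
      (Continuous.integrable_of_compactSpace (by fun_prop)) fun x' => ?_
    simp only [w, ← Real.exp_add, Real.exp_le_exp]
    linarith [hω x x' y y']
  have key := integral_mul_div_integral_le (hw y) (hw y') (g := g) (by fun_prop)
    (fun x => (Real.exp_pos _).le) (hZ y ▸ Real.exp_pos _) (hZ y' ▸ Real.exp_pos _)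
    (Real.exp_pos _).le (Real.exp_le_one_iff.2 (neg_nonpos.2 hω₀)) hdom
    (a := φ₁ x₀ - φ₂ x₀) (b := φ₁ x₀ - φ₂ x₀ + s)
    (fun x => Real.exp_le_exp.2 (hx₀ (Set.mem_univ x)))
    (fun x => Real.exp_le_exp.2 (by linarith [hs x x₀]))
  rw [hP, hZ, hP, hZ, ← Real.exp_sub, ← Real.exp_sub, ← Real.exp_add, Real.exp_le_exp,
    add_sub_cancel_left] at key
  linarith

theorem integral_exp_add_add_eq_one (hκ : ∀ y, Continuous fun x => κ x y) {φ : X → ℝ}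
    (hφ : Continuous φ) {ψ : Y → ℝ} (hψ : sinkhornStep μ κ φ = ψ) (y : Y) :
    ∫ x, Real.exp (κ x y + φ x + ψ y) ∂μ = 1 := by
  simp_rw [Real.exp_add _ (ψ y), integral_mul_const, ← exp_neg_sinkhornStep hκ hφ, hψ,
    ← Real.exp_add, neg_add_cancel, Real.exp_zero]

end SinkhornStep

namespace ContinuousMap

variable {X : Type*} [TopologicalSpace X] [CompactSpace X]

theorem sub_sub_sub_le_two_mul_dist (f g : C(X, ℝ)) (x x' : X) :
    f x - g x - (f x' - g x') ≤ 2 * dist f g := by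
  have h := dist_apply_le_dist (f := f) (g := g) x
  have h' := dist_apply_le_dist (f := f) (g := g) x'
  rw [Real.dist_eq, abs_le] at h h'
  linarith [h.2, h'.1]

theorem dist_le_of_sub_sub_sub_le {f g : C(X, ℝ)} {s : ℝ} {x₀ : X}
    (hs : ∀ x x', f x - g x - (f x' - g x') ≤ s) (h₀ : f x₀ = g x₀) : dist f g ≤ s := by
  have : Nonempty X := ⟨x₀⟩
  refine dist_le_iff_of_nonempty.2 fun x => ?_
  rw [Real.dist_eq, abs_le]
  constructor <;> linarith [hs x x₀, hs x₀ x]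

theorem exists_apply_eq_add_const [Nonempty X] (T : C(X, ℝ) → C(X, ℝ)) {r : ℝ} (hr : r < 1)
    (hT : ∀ φ₁ φ₂ : C(X, ℝ), ∀ s, (∀ x x', φ₁ x - φ₂ x - (φ₁ x' - φ₂ x') ≤ s) →
      ∀ x x', T φ₁ x - T φ₂ x - (T φ₁ x' - T φ₂ x') ≤ r * s) :
    ∃ φ : C(X, ℝ), ∃ c : ℝ, ∀ x, T φ x = φ x + c := by
  obtain ⟨x₀⟩ := ‹Nonempty X›
  set S : C(X, ℝ) → C(X, ℝ) := fun φ => T φ - const X (T φ x₀)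
  have hS₀ : ∀ φ, S φ x₀ = 0 := fun φ => sub_self _
  have hS : ∀ φ₁ φ₂ : C(X, ℝ), ∀ s, (∀ x x', φ₁ x - φ₂ x - (φ₁ x' - φ₂ x') ≤ s) →
      ∀ x x', S φ₁ x - S φ₂ x - (S φ₁ x' - S φ₂ x') ≤ r * s := fun φ₁ φ₂ s hs x x' => by
    have := hT φ₁ φ₂ s hs x x'
    simp only [S, coe_sub, coe_const, Pi.sub_apply, Function.const_apply]
    linarith
  have hSlip : LipschitzWith (Real.toNNReal (r * 2)) S := by
    refine LipschitzWith.of_dist_le' fun φ₁ φ₂ => ?_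
    rw [mul_assoc]
    exact dist_le_of_sub_sub_sub_le (hS φ₁ φ₂ _ (sub_sub_sub_le_two_mul_dist φ₁ φ₂))
      ((hS₀ φ₁).trans (hS₀ φ₂).symm)
  set u : ℕ → C(X, ℝ) := fun n => S^[n] 0
  have hu_osc : ∀ n x x', u (n + 1) x - u n x - (u (n + 1) x' - u n x') ≤
      r ^ n * (2 * dist (u 1) (u 0)) := by
    intro n
    induction n with
    | zero => simpa using sub_sub_sub_le_two_mul_dist (u 1) (u 0)
    | succ n ih =>
      intro x x'
      have := hS _ _ _ ih x x'
      simp only [u, Function.iterate_succ_apply'] at this ⊢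
      rwa [pow_succ, mul_comm _ r, mul_assoc]
  have hu₀ : ∀ n, u n x₀ = 0 := fun n => by
    cases n with
    | zero => rfl
    | succ n => simp only [u, Function.iterate_succ_apply', hS₀]
  have hu_dist : ∀ n, dist (u n) (u (n + 1)) ≤ 2 * dist (u 1) (u 0) * r ^ n := fun n => by
    rw [dist_comm, mul_comm]
    exact dist_le_of_sub_sub_sub_le (hu_osc n) ((hu₀ _).trans (hu₀ n).symm)
  obtain ⟨φ, hφ⟩ := cauchySeq_tendsto_of_complete (cauchySeq_of_le_geometric _ _ hr hu_dist)
  have hfix : S φ = φ := isFixedPt_of_tendsto_iterate hφ hSlip.continuous.continuousAt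
  refine ⟨φ, T φ x₀, fun x => ?_⟩
  have := congr($hfix x)
  simp only [S, coe_sub, coe_const, Pi.sub_apply, Function.const_apply] at this
  linarith

end ContinuousMap

section Sinkhorn

variable {X Y : Type*} [PseudoMetricSpace X] [CompactSpace X] [MeasurableSpace X]
  [OpensMeasurableSpace X] [PseudoMetricSpace Y] [CompactSpace Y] [MeasurableSpace Y]
  [OpensMeasurableSpace Y] (μ : Measure X) [IsProbabilityMeasure μ]
  (ν : Measure Y) [IsProbabilityMeasure ν] {κ : X → Y → ℝ}

theorem eq_zero_of_integral_exp_eq (hκ : Continuous (Function.uncurry κ)) {φ : X → ℝ}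
    {ψ : Y → ℝ} (hφ : Continuous φ) (hψ : Continuous ψ) {c : ℝ}
    (hX : ∀ y, ∫ x, Real.exp (κ x y + φ x) ∂μ = Real.exp (-ψ y))
    (hY : ∀ x, ∫ y, Real.exp (κ x y + ψ y) ∂ν = Real.exp (-(φ x + c))) : c = 0 := by
  have hXY : ∫ x, ∫ y, Real.exp (κ x y + φ x + ψ y) ∂ν ∂μ = Real.exp (-c) := by
    simp_rw [add_right_comm _ (φ _), Real.exp_add _ (φ _), integral_mul_const, hY,
      ← Real.exp_add]
    simp
  have hYX : ∫ y, ∫ x, Real.exp (κ x y + φ x + ψ y) ∂μ ∂ν = 1 := by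
    simp_rw [Real.exp_add _ (ψ _), integral_mul_const, hX, ← Real.exp_add]
    simp
  have hswap := integral_integral_swap (μ := μ) (ν := ν)
    (f := fun x y => Real.exp (κ x y + φ x + ψ y))
    (Continuous.integrable_of_compactSpace (by fun_prop))
  rw [hXY, hYX] at hswap
  simpa using hswap

theorem exists_sinkhornStep_sinkhornStep_eq_add_const (hκ : Continuous (Function.uncurry κ)) :
    ∃ φ : C(X, ℝ), ∃ c : ℝ, ∀ x,
      sinkhornStep ν (Function.swap κ) (sinkhornStep μ κ φ) x = φ x + c := by
  have := nonempty_of_isProbabilityMeasure μ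
  have := nonempty_of_isProbabilityMeasure ν
  have hκswap : Continuous (Function.uncurry (Function.swap κ)) := by fun_prop
  obtain ⟨C, hC⟩ := isCompact_univ.exists_bound_of_continuousOn hκ.continuousOn
  have hbound : ∀ x y, |κ x y| ≤ C := fun x y => hC (x, y) trivial
  have hω : ∀ x x' y y', κ x y' + κ x' y ≤ κ x y + κ x' y' + 4 * C := fun x x' y y' => by
    linarith [abs_le.1 (hbound x y), abs_le.1 (hbound x' y'), abs_le.1 (hbound x y'),
      abs_le.1 (hbound x' y)]
  have hε : Real.exp (-(4 * C)) ≤ 1 := Real.exp_le_one_iff.2 <| by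
    linarith [hω (Classical.arbitrary X) (Classical.arbitrary X) (Classical.arbitrary Y)
      (Classical.arbitrary Y)]
  let T : C(X, ℝ) → C(X, ℝ) := fun φ =>
    ⟨sinkhornStep ν (Function.swap κ) (sinkhornStep μ κ φ),
      continuous_sinkhornStep hκswap (continuous_sinkhornStep hκ φ.continuous)⟩
  refine ContinuousMap.exists_apply_eq_add_const T
    (r := (1 - Real.exp (-(4 * C))) * (1 - Real.exp (-(4 * C))))
    (by nlinarith [Real.exp_pos (-(4 * C))]) fun φ₁ φ₂ s hs x x' => ?_
  rw [mul_assoc]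
  exact sinkhornStep_osc_le (fun x => by fun_prop) (fun y y' x x' => by linarith [hω x x' y y'])
    (continuous_sinkhornStep hκ φ₁.continuous) (continuous_sinkhornStep hκ φ₂.continuous)
    (sinkhornStep_osc_le (fun y => by fun_prop) hω φ₁.continuous φ₂.continuous hs) x x'

theorem exists_sinkhornStep_eq_and_eq (hκ : Continuous (Function.uncurry κ)) :
    ∃ (φ : X → ℝ) (ψ : Y → ℝ), Continuous φ ∧ Continuous ψ ∧
      sinkhornStep μ κ φ = ψ ∧ sinkhornStep ν (Function.swap κ) ψ = φ := by
  obtain ⟨φ, c, hφ⟩ := exists_sinkhornStep_sinkhornStep_eq_add_const μ ν hκ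
  have hψ := continuous_sinkhornStep hκ (μ := μ) φ.continuous
  have hc : c = 0 := by
    refine eq_zero_of_integral_exp_eq μ ν hκ φ.continuous hψ (fun y => ?_) (fun x => ?_)
    · exact (exp_neg_sinkhornStep (fun y => by fun_prop) φ.continuous y).symm
    · rw [← hφ x]
      exact (exp_neg_sinkhornStep (κ := Function.swap κ) (fun x => by fun_prop) hψ x).symm
  refine ⟨φ, _, φ.continuous, hψ, rfl, funext fun x => ?_⟩
  rw [← add_zero (φ x), ← hc]
  exact hφ x

end Sinkhorn

theorem stmt0_general
    {X Y : Type*}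
    [MetricSpace X] [CompactSpace X] [MeasurableSpace X] [BorelSpace X]
    [MetricSpace Y] [CompactSpace Y] [MeasurableSpace Y] [BorelSpace Y]
    (μ : Measure X) [IsProbabilityMeasure μ]
    (ν : Measure Y) [IsProbabilityMeasure ν]
    (c : X × Y → ℝ) (L : ℝ)
    (hc : ∀ p q : X × Y, |c p - c q| ≤ L * (dist p.1 q.1 + dist p.2 q.2))
    (A : X × Y → ℝ) (hA : A = fun p => - c p)
    (β : ℝ) (hβ : 0 < β) :
    ∃ (φ : X → ℝ) (ψ : Y → ℝ),
      Continuous φ ∧ Continuous ψ ∧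
      (∀ x₁ x₂ : X, |φ x₁ - φ x₂| ≤ β * L * dist x₁ x₂) ∧
      (∀ y₁ y₂ : Y, |ψ y₁ - ψ y₂| ≤ β * L * dist y₁ y₂) ∧
      (∀ y : Y, ∫ x, Real.exp (β * A (x, y) + φ x + ψ y) ∂μ = 1) ∧
      (∀ x : X, ∫ y, Real.exp (β * A (x, y) + φ x + ψ y) ∂ν = 1) := by
  set κ : X → Y → ℝ := fun x y => β * A (x, y)
  have hAc : Continuous A := hA ▸ (continuous_of_abs_sub_le_mul_dist_add_dist hc).neg
  have hκ : Continuous (Function.uncurry κ) := by fun_prop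
  have hκX : ∀ y, Continuous fun x => κ x y := fun y => by fun_prop
  have hκY : ∀ x, Continuous fun y => Function.swap κ y x := fun x => by fun_prop
  have hκ_le : ∀ p q : X × Y, κ q.1 q.2 ≤ κ p.1 p.2 + β * L * (dist p.1 q.1 + dist p.2 q.2) :=
    fun p q => by
      simp only [κ, hA, Prod.mk.eta, mul_assoc, ← mul_add]
      exact mul_le_mul_of_nonneg_left (by linarith [(abs_le.1 (hc p q)).2]) hβ.le
  obtain ⟨φ, ψ, hφ, hψ, hφψ, hψφ⟩ := exists_sinkhornStep_eq_and_eq μ ν hκ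
  refine ⟨φ, ψ, hφ, hψ, fun x₁ x₂ => ?_, fun y₁ y₂ => ?_,
    integral_exp_add_add_eq_one hκX hφ hφψ, fun x => ?_⟩
  · rw [← Real.dist_eq, ← hψφ]
    exact sinkhornStep_dist_le hκY hψ (fun y x x' => by simpa using hκ_le (x, y) (x', y)) x₁ x₂
  · rw [← Real.dist_eq, ← hφψ]
    exact sinkhornStep_dist_le hκX hφ (fun x y y' => by simpa using hκ_le (x, y) (x, y')) y₁ y₂
  · convert integral_exp_add_add_eq_one hκY hψ hψφ x using 4
    simp only [Function.swap, κ]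
    ring

theorem stmt0
    {X Y : Type*}
    [MetricSpace X] [CompactSpace X] [MeasurableSpace X] [BorelSpace X]
    [MetricSpace Y] [CompactSpace Y] [MeasurableSpace Y] [BorelSpace Y]
    (μ : Measure X) [IsProbabilityMeasure μ] [μ.IsOpenPosMeasure]
    (ν : Measure Y) [IsProbabilityMeasure ν] [ν.IsOpenPosMeasure]
    (c : X × Y → ℝ) (L : ℝ)
    (hc : ∀ p q : X × Y, |c p - c q| ≤ L * (dist p.1 q.1 + dist p.2 q.2))
    (A : X × Y → ℝ) (hA : A = fun p => - c p)
    (β : ℝ) (hβ : 0 < β) :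
    ∃ (φ : X → ℝ) (ψ : Y → ℝ),
      Continuous φ ∧ Continuous ψ ∧
      (∀ x₁ x₂ : X, |φ x₁ - φ x₂| ≤ β * L * dist x₁ x₂) ∧
      (∀ y₁ y₂ : Y, |ψ y₁ - ψ y₂| ≤ β * L * dist y₁ y₂) ∧
      (∀ y : Y, ∫ x, Real.exp (β * A (x, y) + φ x + ψ y) ∂μ = 1) ∧
      (∀ x : X, ∫ y, Real.exp (β * A (x, y) + φ x + ψ y) ∂ν = 1) :=
  stmt0_general μ ν c L hc A hA β hβ
end

section
/- Let β > 0 and suppose (φ₁, ψ₁) and (φ₂, ψ₂) are two pairs of continuous functions, φ_i : X → ℝ and ψ_i : Y → ℝ, such that for i = 1, 2 one has ∫_X e^{βA(x,y)+φ_i(x)+ψ_i(y)} dμ(x) = 1 for every y ∈ Y and ∫_Y e^{βA(x,y)+φ_i(x)+ψ_i(y)} dν(y) = 1 for every x ∈ X. Then there is a constant d ∈ ℝ such that φ₂ = φ₁ + d and ψ₂ = ψ₁ − d. -/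
/-!
Put `K = exp (β A + φ₁ + ψ₁)`, `f = φ₂ - φ₁`, `g = ψ₂ - ψ₁`, so that both pairs make the
positive kernel `K` have unit marginals, once as `K` and once rescaled as `K e^{f(x) + g(y)}`.
Let `d` be the maximum of `f`, attained at `x₀`. Integrating over `x` gives
`1 ≤ e^{d + g(y)}` for every `y`, so `K(x₀, ·) e^{d + g} ≥ K(x₀, ·)` while both have
`ν`-integral one: they agree `ν`-a.e., hence everywhere by continuity and full support, i.e.
`g = -d`. The `x`-marginals then give `f = d` in the same way.
-/

open MeasureTheory Filter Real

theorem Continuous.eq_of_integral_mul_exp_eq {Z : Type*} [TopologicalSpace Z]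
    [MeasurableSpace Z] {μ : Measure Z} [μ.IsOpenPosMeasure] {K u v : Z → ℝ} (hK : ∀ z, 0 < K z)
    (hu : Continuous u) (hv : Continuous v) (huv : u ≤ v)
    (hiu : Integrable (fun z => K z * exp (u z)) μ)
    (hiv : Integrable (fun z => K z * exp (v z)) μ)
    (h : ∫ z, K z * exp (u z) ∂μ = ∫ z, K z * exp (v z) ∂μ) : u = v := by
  have hle : (fun z => K z * exp (u z)) ≤ᵐ[μ] fun z => K z * exp (v z) :=
    Eventually.of_forall fun z => mul_le_mul_of_nonneg_left (exp_le_exp.2 (huv z)) (hK z).le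
  refine (hu.ae_eq_iff_eq μ hv).1 ?_
  filter_upwards [(integral_eq_iff_of_ae_le hiu hiv hle).1 h] with z hz
  exact exp_injective (mul_left_cancel₀ (hK z).ne' hz)

theorem exists_const_of_integral_mul_exp_eq_one {X Y : Type*}
    [TopologicalSpace X] [CompactSpace X] [Nonempty X] [MeasurableSpace X]
    [TopologicalSpace Y] [Nonempty Y] [MeasurableSpace Y]
    (μ : Measure X) [μ.IsOpenPosMeasure] (ν : Measure Y) [ν.IsOpenPosMeasure]
    {K : X → Y → ℝ} (hK : ∀ x y, 0 < K x y) {f : X → ℝ} {g : Y → ℝ}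
    (hf : Continuous f) (hg : Continuous g)
    (hKμ : ∀ y, ∫ x, K x y ∂μ = 1) (hKν : ∀ x, ∫ y, K x y ∂ν = 1)
    (hμ : ∀ y, ∫ x, K x y * exp (f x + g y) ∂μ = 1)
    (hν : ∀ x, ∫ y, K x y * exp (f x + g y) ∂ν = 1) :
    ∃ d, (∀ x, f x = d) ∧ ∀ y, g y = -d := by
  have hKμi (y : Y) : Integrable (K · y) μ := .of_integral_ne_zero (by simp [hKμ y])
  have hKνi (x : X) : Integrable (K x ·) ν := .of_integral_ne_zero (by simp [hKν x])
  have hμi (y : Y) : Integrable (fun x => K x y * exp (f x + g y)) μ :=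
    .of_integral_ne_zero (by simp [hμ y])
  have hνi (x : X) : Integrable (fun y => K x y * exp (f x + g y)) ν :=
    .of_integral_ne_zero (by simp [hν x])
  obtain ⟨x₀, -, hx₀⟩ := isCompact_univ.exists_isMaxOn Set.univ_nonempty hf.continuousOn
  have hfd (x : X) : f x ≤ f x₀ := hx₀ (Set.mem_univ x)
  have hgd (y : Y) : 0 ≤ f x₀ + g y := by
    rw [← exp_le_exp, exp_zero]
    calc 1 = ∫ x, K x y * exp (f x + g y) ∂μ := (hμ y).symm
      _ ≤ ∫ x, K x y * exp (f x₀ + g y) ∂μ :=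
        integral_mono (hμi y) ((hKμi y).mul_const _) fun x =>
          mul_le_mul_of_nonneg_left (exp_le_exp.2 (by linarith [hfd x])) (hK x y).le
      _ = exp (f x₀ + g y) := by rw [integral_mul_const, hKμ y, one_mul]
  have hg_eq : (fun _ => (0 : ℝ)) = fun y => f x₀ + g y :=
    continuous_const.eq_of_integral_mul_exp_eq (hK x₀) (continuous_const.add hg) hgd
      (by simpa only [exp_zero, mul_one] using hKνi x₀) (hνi x₀)
      (by simp only [exp_zero, mul_one, hKν x₀, hν x₀])
  have hg_const (y : Y) : g y = -f x₀ := by linarith [congrFun hg_eq y]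
  obtain ⟨y₀⟩ := ‹Nonempty Y›
  have hf_eq : (fun x => f x + g y₀) = fun _ => (0 : ℝ) :=
    (hf.add continuous_const).eq_of_integral_mul_exp_eq (fun x => hK x y₀) continuous_const
      (fun x => by linarith [hfd x, hg_const y₀]) (hμi y₀)
      (by simpa only [exp_zero, mul_one] using hKμi y₀)
      (by simp only [exp_zero, mul_one, hKμ y₀, hμ y₀])
  exact ⟨f x₀, fun x => by linarith [congrFun hf_eq x, hg_const y₀], hg_const⟩

theorem stmt1_general
    {X Y : Type*}
    [MetricSpace X] [CompactSpace X] [MeasurableSpace X]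
    [MetricSpace Y] [MeasurableSpace Y]
    (μ : Measure X) [IsProbabilityMeasure μ] [μ.IsOpenPosMeasure]
    (ν : Measure Y) [IsProbabilityMeasure ν] [ν.IsOpenPosMeasure]
    (A : X × Y → ℝ)
    (β : ℝ)
    (φ₁ φ₂ : X → ℝ) (ψ₁ ψ₂ : Y → ℝ)
    (hφ₁ : Continuous φ₁) (hφ₂ : Continuous φ₂)
    (hψ₁ : Continuous ψ₁) (hψ₂ : Continuous ψ₂)
    (h1₁ : ∀ y : Y, ∫ x, Real.exp (β * A (x, y) + φ₁ x + ψ₁ y) ∂μ = 1)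
    (h2₁ : ∀ x : X, ∫ y, Real.exp (β * A (x, y) + φ₁ x + ψ₁ y) ∂ν = 1)
    (h1₂ : ∀ y : Y, ∫ x, Real.exp (β * A (x, y) + φ₂ x + ψ₂ y) ∂μ = 1)
    (h2₂ : ∀ x : X, ∫ y, Real.exp (β * A (x, y) + φ₂ x + ψ₂ y) ∂ν = 1) :
    ∃ d : ℝ, φ₂ = (fun x => φ₁ x + d) ∧ ψ₂ = (fun y => ψ₁ y - d) := by
  have := nonempty_of_isProbabilityMeasure μ
  have := nonempty_of_isProbabilityMeasure ν
  have hsplit (x : X) (y : Y) : exp (β * A (x, y) + φ₂ x + ψ₂ y) =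
      exp (β * A (x, y) + φ₁ x + ψ₁ y) * exp ((φ₂ x - φ₁ x) + (ψ₂ y - ψ₁ y)) := by
    rw [← exp_add]; ring_nf
  obtain ⟨d, hf, hg⟩ := exists_const_of_integral_mul_exp_eq_one μ ν
    (K := fun x y => exp (β * A (x, y) + φ₁ x + ψ₁ y)) (fun _ _ => exp_pos _)
    (f := fun x => φ₂ x - φ₁ x) (g := fun y => ψ₂ y - ψ₁ y)
    (hφ₂.sub hφ₁) (hψ₂.sub hψ₁) h1₁ h2₁
    (fun y => by simpa only [hsplit] using h1₂ y) (fun x => by simpa only [hsplit] using h2₂ x)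
  exact ⟨d, funext fun x => by linarith [hf x], funext fun y => by linarith [hg y]⟩

theorem stmt1
    {X Y : Type*}
    [MetricSpace X] [CompactSpace X] [MeasurableSpace X] [BorelSpace X]
    [MetricSpace Y] [CompactSpace Y] [MeasurableSpace Y] [BorelSpace Y]
    (μ : Measure X) [IsProbabilityMeasure μ] [μ.IsOpenPosMeasure]
    (ν : Measure Y) [IsProbabilityMeasure ν] [ν.IsOpenPosMeasure]
    (c : X × Y → ℝ) (L : ℝ)
    (hc : ∀ p q : X × Y, |c p - c q| ≤ L * (dist p.1 q.1 + dist p.2 q.2))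
    (A : X × Y → ℝ) (hA : A = fun p => - c p)
    (β : ℝ) (hβ : 0 < β)
    (φ₁ φ₂ : X → ℝ) (ψ₁ ψ₂ : Y → ℝ)
    (hφ₁ : Continuous φ₁) (hφ₂ : Continuous φ₂)
    (hψ₁ : Continuous ψ₁) (hψ₂ : Continuous ψ₂)
    (h1₁ : ∀ y : Y, ∫ x, Real.exp (β * A (x, y) + φ₁ x + ψ₁ y) ∂μ = 1)
    (h2₁ : ∀ x : X, ∫ y, Real.exp (β * A (x, y) + φ₁ x + ψ₁ y) ∂ν = 1)
    (h1₂ : ∀ y : Y, ∫ x, Real.exp (β * A (x, y) + φ₂ x + ψ₂ y) ∂μ = 1)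
    (h2₂ : ∀ x : X, ∫ y, Real.exp (β * A (x, y) + φ₂ x + ψ₂ y) ∂ν = 1) :
    ∃ d : ℝ, φ₂ = (fun x => φ₁ x + d) ∧ ψ₂ = (fun y => ψ₁ y - d) :=
  stmt1_general μ ν A β φ₁ φ₂ ψ₁ ψ₂ hφ₁ hφ₂ hψ₁ hψ₂ h1₁ h2₁ h1₂ h2₂
end

section
/- Let (β_n) be a sequence of positive reals with β_n → +∞, and for each n let (φ_n, ψ_n) be a pair of β_n-potentials. Suppose φ_n/β_n converges uniformly to φ : X → ℝ and ψ_n/β_n converges uniformly to ψ : Y → ℝ. Then sup_{x∈X} [A(x,y) + φ(x) + ψ(y)] = 0 for every y ∈ Y and sup_{y∈Y} [A(x,y) + φ(x) + ψ(y)] = 0 for every x ∈ X; equivalently, ψ(y) = inf_{x∈X} [c(x,y) − φ(x)] for all y and φ(x) = inf_{y∈Y} [c(x,y) − ψ(y)] for all x, and in particular φ(x) + ψ(y) ≤ c(x,y) for all (x,y). -/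
/-!
Laplace principle: if `∫ exp (β g) dμ = 1` with `β → ∞` and `g → G` uniformly, then `max G = 0`.
Where `G > 0` at some point it exceeds a positive constant on an open set of positive measure, so
the integral blows up; if `max G < 0` the integral tends to `0`. For `β`-potentials the exponent
`βA + φ_β + ψ_β` is `β` times a function converging uniformly to `A + φ + ψ(y)` (resp. `A + φ(x) + ψ`),
so this maximum is `0`, which is the `c`-transform relation between `φ` and `ψ`.
-/

open MeasureTheory Filter Topology Set Real

section Laplace

variable {X ι : Type*} [TopologicalSpace X] [MeasurableSpace X] (μ : Measure X)
  {l : Filter ι} [l.NeBot] {β : ι → ℝ} {g : ι → X → ℝ} {G : X → ℝ}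

lemma le_zero_of_integral_exp_eq_one [IsFiniteMeasure μ] [μ.IsOpenPosMeasure]
    (hβ : Tendsto β l atTop) (hg : ∀ i, Continuous (g i))
    (h1 : ∀ i, ∫ x, exp (β i * g i x) ∂μ = 1) (hG : TendstoUniformly g G l)
    (x : X) : G x ≤ 0 := by
  by_contra! hx
  set U := {y | G x / 2 < G y}
  have hGc : Continuous G := hG.continuous (.of_forall hg)
  have hU : 0 < μ.real U :=
    ENNReal.toReal_pos ((isOpen_lt continuous_const hGc).measure_pos μ ⟨x, show G x / 2 < G x by linarith⟩).ne'
      (measure_ne_top μ U)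
  have hexp : Tendsto (fun i => exp (β i * (G x / 4)) * μ.real U) l atTop :=
    (tendsto_exp_atTop.comp (hβ.atTop_mul_const (by linarith))).atTop_mul_const hU
  obtain ⟨i, hclose, hβi, hbig⟩ := ((Metric.tendstoUniformly_iff.1 hG (G x / 4) (by linarith)).and
    ((hβ.eventually_ge_atTop 0).and (hexp.eventually_gt_atTop 1))).exists
  have hsub : U ⊆ {y | exp (β i * (G x / 4)) ≤ exp (β i * g i y)} := fun y (hy : G x / 2 < G y) => by
    have := abs_lt.1 (Real.dist_eq _ _ ▸ hclose y)
    exact exp_le_exp.2 (mul_le_mul_of_nonneg_left (by linarith) hβi)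
  have : exp (β i * (G x / 4)) * μ.real U ≤ 1 := calc
    _ ≤ exp (β i * (G x / 4)) * μ.real {y | exp (β i * (G x / 4)) ≤ exp (β i * g i y)} := 
      mul_le_mul_of_nonneg_left (measureReal_mono hsub) (exp_pos _).le
    _ ≤ 1 := h1 i ▸ mul_meas_ge_le_integral_of_nonneg (.of_forall fun _ => (exp_pos _).le)
      (.of_integral_ne_zero (by simp [h1])) _
  linarith

lemma exists_zero_le_of_integral_exp_eq_one [CompactSpace X] [IsProbabilityMeasure μ]
    (hβ : Tendsto β l atTop) (hg : ∀ i, Continuous (g i))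
    (h1 : ∀ i, ∫ x, exp (β i * g i x) ∂μ = 1) (hG : TendstoUniformly g G l) :
    ∃ x, 0 ≤ G x := by
  have := nonempty_of_isProbabilityMeasure μ
  obtain ⟨x₀, -, hx₀⟩ :=
    isCompact_univ.exists_isMaxOn univ_nonempty (hG.continuous (.of_forall hg)).continuousOn
  refine ⟨x₀, ?_⟩
  by_contra! hneg
  obtain ⟨i, hclose, hβi⟩ := ((Metric.tendstoUniformly_iff.1 hG (-G x₀ / 2) (by linarith)).and
    (hβ.eventually_gt_atTop 0)).exists
  have hle : ∀ x, β i * g i x ≤ β i * (G x₀ / 2) := fun x => by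
    have := abs_lt.1 (Real.dist_eq _ _ ▸ hclose x)
    have : G x ≤ G x₀ := hx₀ (mem_univ x)
    exact mul_le_mul_of_nonneg_left (by linarith) hβi.le
  have : 1 ≤ exp (β i * (G x₀ / 2)) := calc
    1 = ∫ x, exp (β i * g i x) ∂μ := (h1 i).symm
    _ ≤ ∫ _, exp (β i * (G x₀ / 2)) ∂μ := integral_mono_of_nonneg
      (.of_forall fun _ => (exp_pos _).le) (integrable_const _) (.of_forall fun x => exp_le_exp.2 (hle x))
    _ = exp (β i * (G x₀ / 2)) := by simp
  have := one_le_exp_iff.1 this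
  nlinarith

theorem isGreatest_range_of_integral_exp_eq_one [CompactSpace X] [IsProbabilityMeasure μ]
    [μ.IsOpenPosMeasure] (hβ : Tendsto β l atTop) (hg : ∀ i, Continuous (g i))
    (h1 : ∀ i, ∫ x, exp (β i * g i x) ∂μ = 1) (hG : TendstoUniformly g G l) :
    IsGreatest (range G) 0 := by
  have hle := le_zero_of_integral_exp_eq_one μ hβ hg h1 hG
  obtain ⟨x, hx⟩ := exists_zero_le_of_integral_exp_eq_one μ hβ hg h1 hG
  exact ⟨⟨x, le_antisymm (hle x) hx⟩, forall_mem_range.2 hle⟩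

end Laplace

theorem isGreatest_range_of_potentials {X ι : Type*} [TopologicalSpace X] [CompactSpace X]
    [MeasurableSpace X] (μ : Measure X) [IsProbabilityMeasure μ] [μ.IsOpenPosMeasure]
    {l : Filter ι} [l.NeBot] {β : ι → ℝ} (hβ₀ : ∀ i, 0 < β i) (hβ : Tendsto β l atTop)
    {k : X → ℝ} (hk : Continuous k) {f : ι → X → ℝ} (hf : ∀ i, Continuous (f i)) {s : ι → ℝ}
    (h1 : ∀ i, ∫ x, exp (β i * -k x + f i x + s i) ∂μ = 1)
    {F : X → ℝ} (hF : TendstoUniformly (fun i x => f i x / β i) F l)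
    {t : ℝ} (ht : Tendsto (fun i => s i / β i) l (𝓝 t)) :
    IsGreatest (range fun x => -k x + F x + t) 0 := by
  have hconst : TendstoUniformly (fun _ x => -k x) (fun x => -k x) l :=
    fun _ hu => .of_forall fun _ _ => refl_mem_uniformity hu
  refine isGreatest_range_of_integral_exp_eq_one μ (g := fun i x => -k x + f i x / β i + s i / β i)
    hβ (fun i => (hk.neg.add ((hf i).div_const _)).add continuous_const) (fun i => ?_)
    ((hconst.add hF).add ht.tendstoUniformly_const)
  rw [← h1 i]
  congr 1 with x
  rw [mul_add, mul_add, mul_div_cancel₀ _ (hβ₀ i).ne', mul_div_cancel₀ _ (hβ₀ i).ne']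

lemma eq_ciInf_sub_of_isGreatest {ι : Type*} {k F : ι → ℝ} {t : ℝ}
    (h : IsGreatest (range fun i => -k i + F i + t) 0) : t = ⨅ i, k i - F i := by
  obtain ⟨⟨i₀, hi₀⟩, hub⟩ := h
  refine (IsLeast.csInf_eq (s := range fun i => k i - F i) ⟨⟨i₀, by linarith⟩, ?_⟩).symm
  rintro _ ⟨i, rfl⟩
  linarith [hub ⟨i, rfl⟩]

theorem stmt9_general
    {X Y : Type*}
    [MetricSpace X] [CompactSpace X] [MeasurableSpace X]
    [MetricSpace Y] [CompactSpace Y] [MeasurableSpace Y]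
    (μ : Measure X) [IsProbabilityMeasure μ] [μ.IsOpenPosMeasure]
    (ν : Measure Y) [IsProbabilityMeasure ν] [ν.IsOpenPosMeasure]
    (c : X × Y → ℝ) (L : ℝ)
    (hc : ∀ p q : X × Y, |c p - c q| ≤ L * (dist p.1 q.1 + dist p.2 q.2))
    (A : X × Y → ℝ) (hA : A = fun p => - c p)
    (βs : ℕ → ℝ) (hβpos : ∀ n, 0 < βs n) (hβtop : Tendsto βs atTop atTop)
    (φs : ℕ → X → ℝ) (ψs : ℕ → Y → ℝ)
    (hφc : ∀ n, Continuous (φs n)) (hψc : ∀ n, Continuous (ψs n))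
    (h1 : ∀ n, ∀ y : Y, ∫ x, Real.exp (βs n * A (x, y) + φs n x + ψs n y) ∂μ = 1)
    (h2 : ∀ n, ∀ x : X, ∫ y, Real.exp (βs n * A (x, y) + φs n x + ψs n y) ∂ν = 1)
    (φ : X → ℝ) (ψ : Y → ℝ)
    (hφ : TendstoUniformly (fun n x => φs n x / βs n) φ atTop)
    (hψ : TendstoUniformly (fun n y => ψs n y / βs n) ψ atTop)
    :
    (∀ y : Y, (⨆ x : X, (A (x, y) + φ x + ψ y)) = 0) ∧
    (∀ x : X, (⨆ y : Y, (A (x, y) + φ x + ψ y)) = 0) ∧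
    (∀ y : Y, ψ y = ⨅ x : X, (c (x, y) - φ x)) ∧
    (∀ x : X, φ x = ⨅ y : Y, (c (x, y) - ψ y)) ∧
    (∀ x : X, ∀ y : Y, φ x + ψ y ≤ c (x, y)) := by
  subst hA
  have hcx (y : Y) : Continuous fun x => c (x, y) :=
    (LipschitzWith.of_dist_le' fun x x' => by simpa [Real.dist_eq] using hc (x, y) (x', y)).continuous
  have hcy (x : X) : Continuous fun y => c (x, y) :=
    (LipschitzWith.of_dist_le' fun y y' => by simpa [Real.dist_eq] using hc (x, y) (x, y')).continuous
  have hmaxX (y : Y) : IsGreatest (range fun x => -c (x, y) + φ x + ψ y) 0 :=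
    isGreatest_range_of_potentials μ hβpos hβtop (hcx y) hφc (h1 · y) hφ (hψ.tendsto_at y)
  have hmaxY (x : X) : IsGreatest (range fun y => -c (x, y) + ψ y + φ x) 0 :=
    isGreatest_range_of_potentials ν hβpos hβtop (hcy x) hψc
      (fun n => by simpa only [add_right_comm] using h2 n x) hψ (hφ.tendsto_at x)
  refine ⟨fun y => (hmaxX y).csSup_eq, fun x => ?_, fun y => eq_ciInf_sub_of_isGreatest (hmaxX y),
    fun x => eq_ciInf_sub_of_isGreatest (hmaxY x), fun x y => ?_⟩
  · simpa only [add_right_comm, iSup] using (hmaxY x).csSup_eq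
  · linarith [(hmaxX y).2 ⟨x, rfl⟩]

theorem stmt9
    {X Y : Type*}
    [MetricSpace X] [CompactSpace X] [MeasurableSpace X] [BorelSpace X]
    [MetricSpace Y] [CompactSpace Y] [MeasurableSpace Y] [BorelSpace Y]
    (μ : Measure X) [IsProbabilityMeasure μ] [μ.IsOpenPosMeasure]
    (ν : Measure Y) [IsProbabilityMeasure ν] [ν.IsOpenPosMeasure]
    (c : X × Y → ℝ) (L : ℝ)
    (hc : ∀ p q : X × Y, |c p - c q| ≤ L * (dist p.1 q.1 + dist p.2 q.2))
    (A : X × Y → ℝ) (hA : A = fun p => - c p)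
    (βs : ℕ → ℝ) (hβpos : ∀ n, 0 < βs n) (hβtop : Tendsto βs atTop atTop)
    (φs : ℕ → X → ℝ) (ψs : ℕ → Y → ℝ)
    (hφc : ∀ n, Continuous (φs n)) (hψc : ∀ n, Continuous (ψs n))
    (h1 : ∀ n, ∀ y : Y, ∫ x, Real.exp (βs n * A (x, y) + φs n x + ψs n y) ∂μ = 1)
    (h2 : ∀ n, ∀ x : X, ∫ y, Real.exp (βs n * A (x, y) + φs n x + ψs n y) ∂ν = 1)
    (φ : X → ℝ) (ψ : Y → ℝ)
    (hφ : TendstoUniformly (fun n x => φs n x / βs n) φ atTop)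
    (hψ : TendstoUniformly (fun n y => ψs n y / βs n) ψ atTop)
    :
    (∀ y : Y, (⨆ x : X, (A (x, y) + φ x + ψ y)) = 0) ∧
    (∀ x : X, (⨆ y : Y, (A (x, y) + φ x + ψ y)) = 0) ∧
    (∀ y : Y, ψ y = ⨅ x : X, (c (x, y) - φ x)) ∧
    (∀ x : X, φ x = ⨅ y : Y, (c (x, y) - ψ y)) ∧
    (∀ x : X, ∀ y : Y, φ x + ψ y ≤ c (x, y)) :=
  stmt9_general μ ν c L hc A hA βs hβpos hβtop φs ψs hφc hψc h1 h2 φ ψ hφ hψ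
end

section
/- Let (β_n) be a sequence of positive reals with β_n → +∞, and for each n let (φ_n, ψ_n) be a pair of β_n-potentials. Suppose φ_n/β_n converges uniformly to φ : X → ℝ and ψ_n/β_n converges uniformly to ψ : Y → ℝ. Then φ(x) + ψ(y) ≤ c(x,y) for all (x,y) and ∫ φ dμ + ∫ ψ dν = α(c); that is, (φ,ψ) is a solution of the Kantorovich dual problem. -/
open MeasureTheory Filter

open Classical in
noncomputable def negKL {X Y : Type*} [MeasurableSpace X] [MeasurableSpace Y]
    (μ : Measure X) (ν : Measure Y) (π : Measure (X × Y)) : EReal :=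
  if π ≪ μ.prod ν ∧ Integrable (llr π (μ.prod ν)) π
  then ((- ∫ p, llr π (μ.prod ν) p ∂π : ℝ) : EReal)
  else ⊥

def IsPlan {X Y : Type*} [MeasurableSpace X] [MeasurableSpace Y]
    (μ : Measure X) (ν : Measure Y) (π : Measure (X × Y)) : Prop :=
  IsProbabilityMeasure π ∧ π.map Prod.fst = μ ∧ π.map Prod.snd = ν

noncomputable def pressure {X Y : Type*} [MeasurableSpace X] [MeasurableSpace Y]
    (μ : Measure X) (ν : Measure Y) (B : X × Y → ℝ) : EReal :=
  ⨆ π : {π : Measure (X × Y) // IsPlan μ ν π},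
    ((∫ p, B p ∂(π.1) : ℝ) : EReal) + negKL μ ν π.1

noncomputable def transportCost {X Y : Type*} [MeasurableSpace X] [MeasurableSpace Y]
    (μ : Measure X) (ν : Measure Y) (c : X × Y → ℝ) : ℝ :=
  ⨅ π : {π : Measure (X × Y) // IsPlan μ ν π}, ∫ p, c p ∂(π.1)

noncomputable def maxVal {X Y : Type*} [MeasurableSpace X] [MeasurableSpace Y]
    (μ : Measure X) (ν : Measure Y) (A : X × Y → ℝ) : ℝ :=
  ⨆ π : {π : Measure (X × Y) // IsPlan μ ν π}, ∫ p, A p ∂(π.1)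

noncomputable def Hmax {X Y : Type*} [MeasurableSpace X] [MeasurableSpace Y]
    (μ : Measure X) (ν : Measure Y) (A : X × Y → ℝ) : EReal :=
  ⨆ π : {π : Measure (X × Y) // IsPlan μ ν π ∧ ∫ p, A p ∂π = maxVal μ ν A},
    negKL μ ν π.1


/-!
If `φ x + ψ y > c (x, y)`, then for large `n` the exponent `βₙ A + φₙ + ψₙ` exceeds a fixed
multiple of `βₙ` on a neighbourhood of `x`, which has positive `μ`-mass; the integral of its
exponential then blows up, contradicting the normalisation of the potentials.

Hence `∫ φ dμ + ∫ ψ dν` is at most the cost of every plan. Conversely, the normalisation of the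
`βₙ`-potentials says exactly that the Gibbs measure `πₙ = e^{βₙ A + φₙ + ψₙ} (μ ⊗ ν)` is a plan, and
Gibbs' inequality (nonnegativity of the Kullback-Leibler divergence of `πₙ` from `μ ⊗ ν`) gives
`βₙ ∫ c dπₙ ≤ ∫ φₙ dμ + ∫ ψₙ dν`. Dividing by `βₙ` and letting `n → ∞` bounds the optimal cost by
`∫ φ dμ + ∫ ψ dν`.
-/

open Topology
open scoped ENNReal

lemma lipschitzWith_of_abs_sub_le_mul_dist_add {X Y : Type*} [PseudoMetricSpace X]
    [PseudoMetricSpace Y] {c : X × Y → ℝ} {L : ℝ}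
    (hc : ∀ p q : X × Y, |c p - c q| ≤ L * (dist p.1 q.1 + dist p.2 q.2)) :
    LipschitzWith (2 * L.toNNReal) c := by
  refine LipschitzWith.of_dist_le_mul fun p q => ?_
  have hsum : dist p.1 q.1 + dist p.2 q.2 ≤ 2 * dist p q := by
    rw [Prod.dist_eq, two_mul]
    exact add_le_add (le_max_left _ _) (le_max_right _ _)
  calc dist (c p) (c q) ≤ L * (dist p.1 q.1 + dist p.2 q.2) := hc p q
    _ ≤ L.toNNReal * (2 * dist p q) :=
        mul_le_mul (le_max_left _ _) hsum (by positivity) (by positivity)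
    _ = ↑(2 * L.toNNReal) * dist p q := by push_cast; ring

lemma Continuous.integrable_of_compactSpace_s10 {Z : Type*} [TopologicalSpace Z] [CompactSpace Z]
    [MeasurableSpace Z] [OpensMeasurableSpace Z] {m : Measure Z} [IsFiniteMeasure m]
    {f : Z → ℝ} (hf : Continuous f) : Integrable f m :=
  hf.integrable_of_hasCompactSupport (HasCompactSupport.of_compactSpace f)

theorem TendstoUniformly.tendsto_integral {Z ι : Type*} [MeasurableSpace Z] {m : Measure Z}
    [IsFiniteMeasure m] {p : Filter ι} {F : ι → Z → ℝ} {f : Z → ℝ}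
    (hF : ∀ n, Integrable (F n) m) (hf : Integrable f m) (h : TendstoUniformly F f p) :
    Tendsto (fun n => ∫ z, F n z ∂m) p (𝓝 (∫ z, f z ∂m)) := by
  rw [Metric.tendsto_nhds]
  intro ε hε
  have hδ : 0 < ε / (m.real Set.univ + 1) := by positivity
  filter_upwards [Metric.tendstoUniformly_iff.1 h _ hδ] with n hn
  rw [dist_eq_norm, ← integral_sub (hF n) hf]
  calc ‖∫ z, F n z - f z ∂m‖ ≤ ε / (m.real Set.univ + 1) * m.real Set.univ :=
        norm_integral_le_of_norm_le_const
          (ae_of_all _ fun z => by rw [← dist_eq_norm, dist_comm]; exact (hn z).le)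
    _ < ε := by
        rw [div_mul_eq_mul_div, div_lt_iff₀ (by positivity)]
        nlinarith [measureReal_nonneg (μ := m) (s := Set.univ)]

theorem nonpos_of_tendstoUniformly_of_integral_exp_eq_one {Z ι : Type*} [TopologicalSpace Z]
    [MeasurableSpace Z] [OpensMeasurableSpace Z] {m : Measure Z} [IsFiniteMeasure m]
    [m.IsOpenPosMeasure] {p : Filter ι} [p.NeBot] {β : ι → ℝ} (hβ : Tendsto β p atTop)
    {g : ι → Z → ℝ} {F : Z → ℝ} (hF : Continuous F)
    (hg : TendstoUniformly (fun n z => g n z / β n) F p)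
    (hint : ∀ n, ∫ z, Real.exp (g n z) ∂m = 1) (z : Z) : F z ≤ 0 := by
  by_contra! hz
  set U := {w | F z / 2 < F w}
  have hU : IsOpen U := isOpen_lt continuous_const hF
  have hmU : 0 < m.real U :=
    ENNReal.toReal_pos (hU.measure_pos m ⟨z, show F z / 2 < F z by linarith⟩).ne'
      (measure_ne_top _ _)
  have hlarge : ∀ᶠ n in p, 1 < Real.exp (β n * (F z / 4)) * m.real U :=
    ((Real.tendsto_exp_atTop.comp (hβ.atTop_mul_const (by positivity))).atTop_mul_const
      hmU).eventually_gt_atTop 1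
  obtain ⟨n, hn, hβn, hgn⟩ := (hlarge.and ((hβ.eventually_gt_atTop 0).and
    (Metric.tendstoUniformly_iff.1 hg (F z / 4) (by positivity)))).exists
  have hbound : ∀ w ∈ U, Real.exp (β n * (F z / 4)) ≤ Real.exp (g n w) := fun w hw => by
    have hclose := (abs_lt.1 (Real.dist_eq _ _ ▸ hgn w)).2
    have : F z / 4 < g n w / β n := by change F z / 2 < F w at hw; linarith
    rw [lt_div_iff₀ hβn] at this
    exact Real.exp_le_exp.2 (by linarith)
  have hexp : Integrable (fun w => Real.exp (g n w)) m :=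
    Integrable.of_integral_ne_zero (by simp [hint n])
  have hset := setIntegral_ge_of_const_le hU.measurableSet (measure_ne_top _ _) hbound
    hexp.integrableOn
  have hle := setIntegral_le_integral (s := U) hexp (ae_of_all _ fun w => (Real.exp_pos (g n w)).le)
  rw [smul_eq_mul] at hset
  linarith [hint n]

theorem log_integral_exp_le_integral_tilted {Z : Type*} [MeasurableSpace Z] {m : Measure Z}
    [IsProbabilityMeasure m] {l : Z → ℝ} (hexp : Integrable (fun z => Real.exp (l z)) m)
    (hl : AEMeasurable l m) (hlt : Integrable l (m.tilted l)) :
    Real.log (∫ z, Real.exp (l z) ∂m) ≤ ∫ z, l z ∂(m.tilted l) := by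
  have := isProbabilityMeasure_tilted hexp
  have hac := tilted_absolutelyContinuous m l
  have hllr : llr (m.tilted l) m =ᵐ[m.tilted l] fun z => l z - Real.log (∫ z, Real.exp (l z) ∂m) :=
    hac.ae_le <| by
      filter_upwards [llr_tilted_left .rfl hexp hl, llr_self m] with z hz hself
      simp [hz, hself]
  have hgibbs := InformationTheory.integral_llr_add_sub_measure_univ_nonneg hac
    ((hlt.sub (integrable_const _)).congr hllr.symm)
  rw [integral_congr_ae hllr, integral_sub hlt (integrable_const _)] at hgibbs
  simp only [integral_const, probReal_univ, smul_eq_mul, one_mul] at hgibbs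
  linarith

lemma lintegral_ofReal_exp_eq_one {W : Type*} [MeasurableSpace W] {m : Measure W} {f : W → ℝ}
    (h : ∫ w, Real.exp (f w) ∂m = 1) : ∫⁻ w, ENNReal.ofReal (Real.exp (f w)) ∂m = 1 := by
  rw [← ofReal_integral_eq_lintegral_ofReal (.of_integral_ne_zero (by simp [h]))
    (ae_of_all _ fun _ => (Real.exp_pos _).le), h, ENNReal.ofReal_one]

section Plans

variable {X Y : Type*} [MeasurableSpace X] [MeasurableSpace Y] {μ : Measure X} {ν : Measure Y}
  {π : Measure (X × Y)}

lemma IsPlan.integral_comp_fst (hπ : IsPlan μ ν π) {f : X → ℝ}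
    (hf : AEStronglyMeasurable f μ) : ∫ p, f p.1 ∂π = ∫ x, f x ∂μ := by
  rw [← hπ.2.1] at hf ⊢
  exact (integral_map measurable_fst.aemeasurable hf).symm

lemma IsPlan.integral_comp_snd (hπ : IsPlan μ ν π) {f : Y → ℝ}
    (hf : AEStronglyMeasurable f ν) : ∫ p, f p.2 ∂π = ∫ y, f y ∂ν := by
  rw [← hπ.2.2] at hf ⊢
  exact (integral_map measurable_snd.aemeasurable hf).symm

lemma isPlan_prod [IsProbabilityMeasure μ] [IsProbabilityMeasure ν] : IsPlan μ ν (μ.prod ν) :=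
  ⟨inferInstance, by simp, by simp⟩

lemma map_fst_withDensity_prod [SFinite μ] [SFinite ν] {f : X × Y → ℝ≥0∞} (hf : Measurable f)
    (h : ∀ x, ∫⁻ y, f (x, y) ∂ν = 1) : ((μ.prod ν).withDensity f).map Prod.fst = μ := by
  ext s hs
  rw [Measure.map_apply measurable_fst hs, ← Set.prod_univ, withDensity_apply _ (hs.prod .univ),
    ← Measure.prod_restrict, Measure.restrict_univ, lintegral_prod _ hf.aemeasurable]
  simp [h]

lemma map_snd_withDensity_prod [SFinite μ] [SFinite ν] {f : X × Y → ℝ≥0∞} (hf : Measurable f)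
    (h : ∀ y, ∫⁻ x, f (x, y) ∂μ = 1) : ((μ.prod ν).withDensity f).map Prod.snd = ν := by
  ext s hs
  rw [Measure.map_apply measurable_snd hs, ← Set.univ_prod,
    withDensity_apply _ (MeasurableSet.univ.prod hs), ← Measure.prod_restrict,
    Measure.restrict_univ, lintegral_prod_symm _ hf.aemeasurable]
  simp [h]

lemma integral_exp_prod_eq_one [IsProbabilityMeasure μ] [SFinite ν]
    {l : X × Y → ℝ} (hl : Measurable l) (h : ∀ x, ∫ y, Real.exp (l (x, y)) ∂ν = 1) :
    ∫ p, Real.exp (l p) ∂(μ.prod ν) = 1 := by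
  rw [integral_eq_lintegral_of_nonneg_ae (ae_of_all _ fun _ => (Real.exp_pos _).le)
    hl.exp.aestronglyMeasurable, lintegral_prod _ hl.exp.ennreal_ofReal.aemeasurable]
  simp [lintegral_ofReal_exp_eq_one (h _)]

lemma isPlan_tilted_prod [IsProbabilityMeasure μ] [IsProbabilityMeasure ν] {l : X × Y → ℝ}
    (hl : Measurable l) (h1 : ∀ y, ∫ x, Real.exp (l (x, y)) ∂μ = 1)
    (h2 : ∀ x, ∫ y, Real.exp (l (x, y)) ∂ν = 1) : IsPlan μ ν ((μ.prod ν).tilted l) := by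
  have htot := integral_exp_prod_eq_one (μ := μ) hl h2
  have htilted : (μ.prod ν).tilted l =
      (μ.prod ν).withDensity fun p => ENNReal.ofReal (Real.exp (l p)) := by
    simp [Measure.tilted, htot]
  refine ⟨isProbabilityMeasure_tilted (.of_integral_ne_zero (by simp [htot])), ?_, ?_⟩
  · rw [htilted]
    exact map_fst_withDensity_prod hl.exp.ennreal_ofReal fun x => lintegral_ofReal_exp_eq_one (h2 x)
  · rw [htilted]
    exact map_snd_withDensity_prod hl.exp.ennreal_ofReal fun y => lintegral_ofReal_exp_eq_one (h1 y)

def IsPotentialPair (μ : Measure X) (ν : Measure Y) (A : X × Y → ℝ) (β : ℝ) (φ : X → ℝ)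
    (ψ : Y → ℝ) : Prop :=
  (∀ y, ∫ x, Real.exp (β * A (x, y) + φ x + ψ y) ∂μ = 1) ∧
    ∀ x, ∫ y, Real.exp (β * A (x, y) + φ x + ψ y) ∂ν = 1

end Plans

theorem add_add_nonpos_of_tendstoUniformly_div {X Y : Type*} [TopologicalSpace X]
    [MeasurableSpace X] [OpensMeasurableSpace X] [TopologicalSpace Y] [MeasurableSpace Y]
    {μ : Measure X} [IsFiniteMeasure μ] [μ.IsOpenPosMeasure] {ν : Measure Y}
    {A : X × Y → ℝ} {φ : X → ℝ} {ψ : Y → ℝ} {βs : ℕ → ℝ}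
    (hβpos : ∀ n, 0 < βs n) (hβtop : Tendsto βs atTop atTop) {φs : ℕ → X → ℝ} {ψs : ℕ → Y → ℝ}
    (hpot : ∀ n, IsPotentialPair μ ν A (βs n) (φs n) (ψs n)) (hA : Continuous A)
    (hφ : TendstoUniformly (fun n x => φs n x / βs n) φ atTop) (hφc : Continuous φ)
    (hψ : TendstoUniformly (fun n y => ψs n y / βs n) ψ atTop) (x : X) (y : Y) :
    A (x, y) + φ x + ψ y ≤ 0 := by
  have hconst : TendstoUniformly (fun (_ : ℕ) x' => A (x', y)) (fun x' => A (x', y)) atTop :=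
    fun _ hu => .of_forall fun _ _ => refl_mem_uniformity hu
  have hlim : TendstoUniformly (fun n x' => (βs n * A (x', y) + φs n x' + ψs n y) / βs n)
      (fun x' => A (x', y) + φ x' + ψ y) atTop := by
    convert (hconst.add hφ).add (hψ.comp fun _ => y) using 1
    · funext n x'
      simp only [Pi.add_apply, Function.comp_apply]
      field_simp [(hβpos n).ne']
    · rfl
  exact nonpos_of_tendstoUniformly_of_integral_exp_eq_one hβtop (by fun_prop) hlim
    (fun n => (hpot n).1 y) x

section Cost

variable {X Y : Type*} [MetricSpace X] [CompactSpace X] [MeasurableSpace X] [BorelSpace X]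
  [MetricSpace Y] [CompactSpace Y] [MeasurableSpace Y] [BorelSpace Y]
  {μ : Measure X} {ν : Measure Y} {c : X × Y → ℝ}

lemma IsPlan.integral_add_le_integral {π : Measure (X × Y)} (hπ : IsPlan μ ν π)
    (hc : Continuous c) {φ : X → ℝ} {ψ : Y → ℝ} (hφ : Continuous φ) (hψ : Continuous ψ)
    (hφψ : ∀ x y, φ x + ψ y ≤ c (x, y)) :
    ∫ x, φ x ∂μ + ∫ y, ψ y ∂ν ≤ ∫ p, c p ∂π := by
  have := hπ.1
  have hφπ : Integrable (fun p : X × Y => φ p.1) π :=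
    (hφ.comp continuous_fst).integrable_of_compactSpace_s10
  have hψπ : Integrable (fun p : X × Y => ψ p.2) π :=
    (hψ.comp continuous_snd).integrable_of_compactSpace_s10
  rw [← hπ.integral_comp_fst hφ.aestronglyMeasurable,
    ← hπ.integral_comp_snd hψ.aestronglyMeasurable, ← integral_add hφπ hψπ]
  exact integral_mono (hφπ.add hψπ) hc.integrable_of_compactSpace_s10 fun p => hφψ p.1 p.2

lemma transportCost_le_integral (hc : Continuous c) {π : Measure (X × Y)} (hπ : IsPlan μ ν π) :
    transportCost μ ν c ≤ ∫ p, c p ∂π := by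
  obtain ⟨C, hC⟩ := isCompact_univ.exists_bound_of_continuousOn hc.continuousOn
  refine ciInf_le (f := fun π : {π // IsPlan μ ν π} => ∫ p, c p ∂π.1) ⟨-C, ?_⟩ ⟨π, hπ⟩
  rintro _ ⟨⟨π', hπ'⟩, rfl⟩
  have := hπ'.1
  calc -C = ∫ _, -C ∂π' := by simp
    _ ≤ ∫ p, c p ∂π' := integral_mono (integrable_const _) hc.integrable_of_compactSpace_s10
        fun p => neg_le_of_abs_le (hC p (Set.mem_univ p))

lemma integral_add_le_transportCost [IsProbabilityMeasure μ] [IsProbabilityMeasure ν]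
    (hc : Continuous c) {φ : X → ℝ} {ψ : Y → ℝ} (hφ : Continuous φ) (hψ : Continuous ψ)
    (hφψ : ∀ x y, φ x + ψ y ≤ c (x, y)) :
    ∫ x, φ x ∂μ + ∫ y, ψ y ∂ν ≤ transportCost μ ν c :=
  haveI : Nonempty {π : Measure (X × Y) // IsPlan μ ν π} := ⟨⟨_, isPlan_prod⟩⟩
  le_ciInf fun π => π.2.integral_add_le_integral hc hφ hψ hφψ

variable [IsProbabilityMeasure μ] [IsProbabilityMeasure ν] {A : X × Y → ℝ} {β : ℝ}
  {φ : X → ℝ} {ψ : Y → ℝ}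

theorem IsPotentialPair.exists_isPlan_nonneg (hpot : IsPotentialPair μ ν A β φ ψ)
    (hA : Continuous A) (hφ : Continuous φ) (hψ : Continuous ψ) :
    ∃ π, IsPlan μ ν π ∧ 0 ≤ β * ∫ p, A p ∂π + ∫ x, φ x ∂μ + ∫ y, ψ y ∂ν := by
  set l : X × Y → ℝ := fun p => β * A p + φ p.1 + ψ p.2
  have hl : Continuous l := by fun_prop
  have hπ := isPlan_tilted_prod hl.measurable hpot.1 hpot.2
  set π := (μ.prod ν).tilted l
  have := hπ.1
  refine ⟨π, hπ, ?_⟩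
  have hgibbs := log_integral_exp_le_integral_tilted (m := μ.prod ν)
    hl.rexp.integrable_of_compactSpace_s10 hl.aemeasurable hl.integrable_of_compactSpace_s10
  rw [integral_exp_prod_eq_one hl.measurable hpot.2, Real.log_one] at hgibbs
  have hint {f : X × Y → ℝ} (hf : Continuous f) : Integrable f π := hf.integrable_of_compactSpace_s10
  have hsplit : ∫ p, l p ∂π = β * ∫ p, A p ∂π + ∫ x, φ x ∂μ + ∫ y, ψ y ∂ν := by
    rw [integral_add (hint (by fun_prop)) (hint (by fun_prop)),
      integral_add (hint (by fun_prop)) (hint (by fun_prop)), integral_const_mul,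
      hπ.integral_comp_fst hφ.aestronglyMeasurable, hπ.integral_comp_snd hψ.aestronglyMeasurable]
  linarith

theorem IsPotentialPair.transportCost_le (hpot : IsPotentialPair μ ν A β φ ψ) (hβ : 0 < β)
    (hc : Continuous c) (hA : ∀ p, A p = -c p) (hφ : Continuous φ) (hψ : Continuous ψ) :
    transportCost μ ν c ≤ ∫ x, φ x / β ∂μ + ∫ y, ψ y / β ∂ν := by
  obtain ⟨π, hπ, hnonneg⟩ :=
    hpot.exists_isPlan_nonneg ((continuous_congr fun p => (hA p).symm).mp hc.neg) hφ hψ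
  simp only [hA, integral_neg] at hnonneg
  rw [integral_div, integral_div, ← add_div, le_div_iff₀ hβ]
  have := mul_le_mul_of_nonneg_right (transportCost_le_integral hc hπ) hβ.le
  linarith

end Cost

theorem stmt10_general
    {X Y : Type*}
    [MetricSpace X] [CompactSpace X] [MeasurableSpace X] [BorelSpace X]
    [MetricSpace Y] [CompactSpace Y] [MeasurableSpace Y] [BorelSpace Y]
    (μ : Measure X) [IsProbabilityMeasure μ] [μ.IsOpenPosMeasure]
    (ν : Measure Y) [IsProbabilityMeasure ν]
    (c : X × Y → ℝ) (L : ℝ)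
    (hc : ∀ p q : X × Y, |c p - c q| ≤ L * (dist p.1 q.1 + dist p.2 q.2))
    (A : X × Y → ℝ) (hA : A = fun p => - c p)
    (βs : ℕ → ℝ) (hβpos : ∀ n, 0 < βs n) (hβtop : Tendsto βs atTop atTop)
    (φs : ℕ → X → ℝ) (ψs : ℕ → Y → ℝ)
    (hφc : ∀ n, Continuous (φs n)) (hψc : ∀ n, Continuous (ψs n))
    (h1 : ∀ n, ∀ y : Y, ∫ x, Real.exp (βs n * A (x, y) + φs n x + ψs n y) ∂μ = 1)
    (h2 : ∀ n, ∀ x : X, ∫ y, Real.exp (βs n * A (x, y) + φs n x + ψs n y) ∂ν = 1)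
    (φ : X → ℝ) (ψ : Y → ℝ)
    (hφ : TendstoUniformly (fun n x => φs n x / βs n) φ atTop)
    (hψ : TendstoUniformly (fun n y => ψs n y / βs n) ψ atTop)
    :
    (∀ x : X, ∀ y : Y, φ x + ψ y ≤ c (x, y)) ∧
    ∫ x, φ x ∂μ + ∫ y, ψ y ∂ν = transportCost μ ν c := by
  have hpot n : IsPotentialPair μ ν A (βs n) (φs n) (ψs n) := ⟨h1 n, h2 n⟩
  have hcc : Continuous c := (lipschitzWith_of_abs_sub_le_mul_dist_add hc).continuous
  have hφcont := hφ.continuous (.of_forall fun n => (hφc n).div_const _)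
  have hψcont := hψ.continuous (.of_forall fun n => (hψc n).div_const _)
  have hdual x y : φ x + ψ y ≤ c (x, y) := by
    have := add_add_nonpos_of_tendstoUniformly_div hβpos hβtop hpot (hA ▸ hcc.neg) hφ hφcont hψ x y
    simp only [hA] at this
    linarith
  have hφlim := hφ.tendsto_integral (m := μ)
    (fun n => ((hφc n).div_const _).integrable_of_compactSpace_s10) hφcont.integrable_of_compactSpace_s10
  have hψlim := hψ.tendsto_integral (m := ν)
    (fun n => ((hψc n).div_const _).integrable_of_compactSpace_s10) hψcont.integrable_of_compactSpace_s10
  refine ⟨hdual, le_antisymm (integral_add_le_transportCost hcc hφcont hψcont hdual) ?_⟩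
  exact ge_of_tendsto' (hφlim.add hψlim) fun n =>
    (hpot n).transportCost_le (hβpos n) hcc (by simp [hA]) (hφc n) (hψc n)

theorem stmt10
    {X Y : Type*}
    [MetricSpace X] [CompactSpace X] [MeasurableSpace X] [BorelSpace X]
    [MetricSpace Y] [CompactSpace Y] [MeasurableSpace Y] [BorelSpace Y]
    (μ : Measure X) [IsProbabilityMeasure μ] [μ.IsOpenPosMeasure]
    (ν : Measure Y) [IsProbabilityMeasure ν] [ν.IsOpenPosMeasure]
    (c : X × Y → ℝ) (L : ℝ)
    (hc : ∀ p q : X × Y, |c p - c q| ≤ L * (dist p.1 q.1 + dist p.2 q.2))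
    (A : X × Y → ℝ) (hA : A = fun p => - c p)
    (βs : ℕ → ℝ) (hβpos : ∀ n, 0 < βs n) (hβtop : Tendsto βs atTop atTop)
    (φs : ℕ → X → ℝ) (ψs : ℕ → Y → ℝ)
    (hφc : ∀ n, Continuous (φs n)) (hψc : ∀ n, Continuous (ψs n))
    (h1 : ∀ n, ∀ y : Y, ∫ x, Real.exp (βs n * A (x, y) + φs n x + ψs n y) ∂μ = 1)
    (h2 : ∀ n, ∀ x : X, ∫ y, Real.exp (βs n * A (x, y) + φs n x + ψs n y) ∂ν = 1)
    (φ : X → ℝ) (ψ : Y → ℝ)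
    (hφ : TendstoUniformly (fun n x => φs n x / βs n) φ atTop)
    (hψ : TendstoUniformly (fun n y => ψs n y / βs n) ψ atTop)
    :
    (∀ x : X, ∀ y : Y, φ x + ψ y ≤ c (x, y)) ∧
    ∫ x, φ x ∂μ + ∫ y, ψ y ∂ν = transportCost μ ν c :=
  stmt10_general μ ν c L hc A hA βs hβpos hβtop φs ψs hφc hψc h1 h2 φ ψ hφ hψ
end

section
/- Let U and Z be compact metric spaces, let ρ be a finite Borel measure on U with supp(ρ) = U, let W : U×Z → ℝ be continuous, and for β > 0 let W_β : U×Z → ℝ be measurable functions converging uniformly to W as β → +∞. Then the functions z ↦ (1/β) log ∫_U e^{βW_β(u,z)} dρ(u) converge uniformly on Z, as β → +∞, to the function z ↦ sup_{u∈U} W(u,z). -/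
/-! Laplace's principle. Let `M = sup_u W(u, z)`, attained at `u₀`. Once `W_β` is `ε`-close to `W`,
`e^{β W_β(·, z)}` is at most `e^{β (M + ε)}` on all of `U` and at least `e^{β (M - 2ε)}` on the
`δ`-ball around `u₀`, where `δ` comes from the uniform continuity of `W`. By compactness the balls of
radius `δ` have measure at least some `c > 0` independently of their centre, so
`β⁻¹ log ∫ e^{β W_β(u, z)} dρ(u)` lies between `M - 2ε + β⁻¹ log c` and `M + ε + β⁻¹ log ρ(U)`,
uniformly in `z`. -/

open MeasureTheory Filter Metric Set Real Topology

theorem exists_pos_forall_le_measureReal_ball {X : Type*} [PseudoMetricSpace X] [CompactSpace X]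
    [MeasurableSpace X] (μ : Measure X) [IsFiniteMeasure μ] [μ.IsOpenPosMeasure]
    {δ : ℝ} (hδ : 0 < δ) : ∃ c > 0, ∀ x, c ≤ μ.real (ball x δ) := by
  obtain ⟨t, -, ht, hcover⟩ := finite_cover_balls_of_compact (isCompact_univ (X := X)) (half_pos hδ)
  have hsmall : ∀ᶠ c in 𝓝[>] (0 : ℝ), ∀ i ∈ t, c ≤ μ.real (ball i (δ / 2)) :=
    (eventually_all_finite ht).2 fun i _ =>
      (eventually_le_nhds (ENNReal.toReal_pos (measure_ball_pos μ i (half_pos hδ)).ne'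
        (measure_ne_top μ _))).filter_mono nhdsWithin_le_nhds
  obtain ⟨c, hc, hc0⟩ := (hsmall.and self_mem_nhdsWithin).exists
  refine ⟨c, hc0, fun x => ?_⟩
  obtain ⟨i, hi, hxi⟩ := mem_iUnion₂.1 (hcover (mem_univ x))
  calc c ≤ μ.real (ball i (δ / 2)) := hc i hi
    _ ≤ μ.real (ball x δ) := by
      refine measureReal_mono (ball_subset_ball' ?_)
      rw [dist_comm]
      linarith [mem_ball.1 hxi]

section LogIntegralExp

variable {α : Type*} [MeasurableSpace α] {μ : Measure α} [IsFiniteMeasure μ] {f : α → ℝ} {β : ℝ}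

theorem integrable_exp_mul_of_le (hf : AEMeasurable f μ) (hβ : 0 ≤ β) {b : ℝ}
    (hfb : ∀ x, f x ≤ b) : Integrable (fun x => exp (β * f x)) μ :=
  Integrable.of_bound (by fun_prop) (exp (β * b)) <| ae_of_all _ fun x => by
    rw [norm_of_nonneg (exp_pos _).le]
    gcongr
    exact hfb x

theorem inv_mul_log_integral_exp_le [NeZero μ] (hβ : 0 < β) {b : ℝ}
    (hfi : Integrable (fun x => exp (β * f x)) μ) (hfb : ∀ x, f x ≤ b) :
    β⁻¹ * log (∫ x, exp (β * f x) ∂μ) ≤ b + β⁻¹ * log (μ.real univ) := by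
  have hint : ∫ x, exp (β * f x) ∂μ ≤ μ.real univ * exp (β * b) :=
    calc ∫ x, exp (β * f x) ∂μ ≤ ∫ _, exp (β * b) ∂μ :=
          integral_mono hfi (integrable_const _) fun x => by gcongr; exact hfb x
      _ = μ.real univ * exp (β * b) := by rw [integral_const, smul_eq_mul]
  have hlog := log_le_log (integral_exp_pos hfi) hint
  rw [log_mul measureReal_univ_ne_zero (exp_pos _).ne', log_exp] at hlog
  calc β⁻¹ * log (∫ x, exp (β * f x) ∂μ) ≤ β⁻¹ * (log (μ.real univ) + β * b) := by gcongr
    _ = b + β⁻¹ * log (μ.real univ) := by field_simp; ring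

theorem le_inv_mul_log_integral_exp (hβ : 0 < β) {a c : ℝ} {s : Set α} (hs : MeasurableSet s)
    (hc : 0 < c) (hcs : c ≤ μ.real s) (hfi : Integrable (fun x => exp (β * f x)) μ)
    (hfa : ∀ x ∈ s, a ≤ f x) :
    a + β⁻¹ * log c ≤ β⁻¹ * log (∫ x, exp (β * f x) ∂μ) := by
  have hint : exp (β * a) * c ≤ ∫ x, exp (β * f x) ∂μ :=
    calc exp (β * a) * c ≤ exp (β * a) * μ.real s := by gcongr
      _ ≤ ∫ x in s, exp (β * f x) ∂μ :=
          setIntegral_ge_of_const_le_real hs (measure_ne_top μ s)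
            (fun x hx => by gcongr; exact hfa x hx) hfi.integrableOn
      _ ≤ ∫ x, exp (β * f x) ∂μ :=
          setIntegral_le_integral hfi (ae_of_all _ fun _ => (exp_pos _).le)
  have hlog := log_le_log (by positivity) hint
  rw [log_mul (exp_pos _).ne' hc.ne', log_exp] at hlog
  calc a + β⁻¹ * log c = β⁻¹ * (β * a + log c) := by field_simp
    _ ≤ β⁻¹ * log (∫ x, exp (β * f x) ∂μ) := by gcongr

end LogIntegralExp

theorem eventually_abs_inv_mul_lt (a : ℝ) {η : ℝ} (hη : 0 < η) :
    ∀ᶠ β : ℝ in atTop, |β⁻¹ * a| < η := by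
  filter_upwards [Metric.tendsto_nhds.1 (by simpa using tendsto_inv_atTop_zero.mul_const a) η hη]
    with β hβ
  rwa [Real.dist_0_eq_abs] at hβ

theorem dist_iSup_inv_mul_log_integral_exp_lt {X : Type*} [PseudoMetricSpace X] [CompactSpace X]
    [Nonempty X] [MeasurableSpace X] [OpensMeasurableSpace X] {μ : Measure X} [IsFiniteMeasure μ]
    [NeZero μ] {g f : X → ℝ} (hg : Continuous g) (hf : Measurable f) {β η δ c : ℝ}
    (hβ : 0 < β) (hfg : ∀ x, dist (g x) (f x) < η)
    (hgδ : ∀ x y, dist x y < δ → dist (g x) (g y) < η) (hc : 0 < c)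
    (hcball : ∀ x, c ≤ μ.real (ball x δ)) (hβc : |β⁻¹ * log c| < η)
    (hβμ : |β⁻¹ * log (μ.real univ)| < η) :
    dist (⨆ x, g x) (β⁻¹ * log (∫ x, exp (β * f x) ∂μ)) < 3 * η := by
  obtain ⟨x₀, hx₀⟩ : ∃ x₀, g x₀ = ⨆ x, g x := (isCompact_range hg).sSup_mem (range_nonempty _)
  have hle (x : X) : g x ≤ ⨆ x, g x := le_ciSup (isCompact_range hg).bddAbove x
  set M := ⨆ x, g x
  have hfub (x : X) : f x ≤ M + η := by
    linarith [hle x, (abs_lt.1 (Real.dist_eq _ _ ▸ hfg x)).1]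
  have hflb (x : X) (hx : x ∈ ball x₀ δ) : M - 2 * η ≤ f x := by
    linarith [(abs_lt.1 (Real.dist_eq _ _ ▸ hgδ x x₀ hx)).1,
      (abs_lt.1 (Real.dist_eq _ _ ▸ hfg x)).2]
  have hfi := integrable_exp_mul_of_le (μ := μ) hf.aemeasurable hβ.le hfub
  have hupper := inv_mul_log_integral_exp_le hβ hfi hfub
  have hlower := le_inv_mul_log_integral_exp hβ measurableSet_ball hc (hcball x₀) hfi hflb
  rw [Real.dist_eq, abs_lt]
  constructor <;> linarith [(abs_lt.1 hβc).1, (abs_lt.1 hβμ).2]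

theorem stmt19_general
    {U Z : Type*}
    [MetricSpace U] [CompactSpace U] [MeasurableSpace U] [BorelSpace U]
    [MetricSpace Z] [CompactSpace Z] [MeasurableSpace Z]
    (ρ : Measure U) [IsFiniteMeasure ρ] [ρ.IsOpenPosMeasure]
    (W : U × Z → ℝ) (hW : Continuous W)
    (WF : ℝ → U × Z → ℝ)
    (hWFm : ∀ β : ℝ, Measurable (WF β))
    (hWF : TendstoUniformly WF W atTop) :
    TendstoUniformly
      (fun (β : ℝ) (z : Z) => β⁻¹ * Real.log (∫ u, Real.exp (β * WF β (u, z)) ∂ρ))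
      (fun z => ⨆ u : U, W (u, z)) atTop := by
  rcases isEmpty_or_nonempty U with hU | hU
  · simp only [Measure.eq_zero_of_isEmpty ρ, integral_zero_measure, log_zero, mul_zero,
      Real.iSup_of_isEmpty]
    exact tendsto_const_nhds.tendstoUniformly_const
  rw [Metric.tendstoUniformly_iff]
  intro ε hε
  have hη : 0 < ε / 3 := by positivity
  obtain ⟨δ, hδ, hWδ⟩ :=
    Metric.uniformContinuous_iff.1 (CompactSpace.uniformContinuous_of_continuous hW) _ hη
  obtain ⟨c, hc, hcball⟩ := exists_pos_forall_le_measureReal_ball ρ hδ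
  filter_upwards [Metric.tendstoUniformly_iff.1 hWF _ hη, eventually_abs_inv_mul_lt (log c) hη,
    eventually_abs_inv_mul_lt (log (ρ.real univ)) hη, eventually_gt_atTop 0]
    with β hβW hβc hβρ hβ z
  refine (dist_iSup_inv_mul_log_integral_exp_lt (by fun_prop)
    ((hWFm β).comp measurable_prodMk_right) hβ (fun u => hβW (u, z))
    (fun u v huv => hWδ (by rwa [dist_prod_same_right])) hc hcball hβc hβρ).trans_eq ?_
  ring

theorem stmt19
    {U Z : Type*}
    [MetricSpace U] [CompactSpace U] [MeasurableSpace U] [BorelSpace U]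
    [MetricSpace Z] [CompactSpace Z] [MeasurableSpace Z] [BorelSpace Z]
    (ρ : Measure U) [IsFiniteMeasure ρ] [ρ.IsOpenPosMeasure]
    (W : U × Z → ℝ) (hW : Continuous W)
    (WF : ℝ → U × Z → ℝ)
    (hWFm : ∀ β : ℝ, Measurable (WF β))
    (hWF : TendstoUniformly WF W atTop) :
    TendstoUniformly
      (fun (β : ℝ) (z : Z) => β⁻¹ * Real.log (∫ u, Real.exp (β * WF β (u, z)) ∂ρ))
      (fun z => ⨆ u : U, W (u, z)) atTop :=
  stmt19_general ρ W hW WF hWFm hWF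
end
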